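/- Algebraic inversion of the flux–gradient relations: let d ≥ 1, let J, D ∈ ℝ^{n×d}, g ∈ ℝ^d and α ∈ ℝ. Suppose that F J = D and that the rows of J satisfy the closure relation ∑_{i=1}^n J_{ij} = −α g_j for every j = 1,…,d. Then the submatrix J′ ∈ ℝ^{(n−1)×d} consisting of the first n−1 rows of J satisfies F_0 J′ = −(D′ + α c̃′ ⊗ g), where D′ ∈ ℝ^{(n−1)×d} consists of the first n−1 rows of D and (c̃′ ⊗ g)_{ij} = c̃′_i g_j; consequently J′ = −F_0^{−1}(D′ + α c̃′ ⊗ g). -/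

import Mathlib

/-- The Maxwell–Stefan matrix `F` with entries `F i j = k i j * c i` for `j ≠ i`
and `F i i = -∑_{r ≠ i} k i r * c r`. The number of species is `m + 1` (the
paper's `n`), and the paper's index `n` is `Fin.last m`. -/
def MSmatF (m : ℕ) (k : Fin (m + 1) → Fin (m + 1) → ℝ)
    (c : Fin (m + 1) → ℝ) : Matrix (Fin (m + 1)) (Fin (m + 1)) ℝ :=
  Matrix.of fun i j =>
    if i = j then -(∑ r ∈ Finset.univ.erase i, k i r * c r) else k i j * c i

/-- The reduced matrix `F₀` with entries `[F₀] i j = -(k i j - k i n) * c i` for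
`i ≠ j` and `[F₀] i i = ∑_{j ≠ i, j ≤ n-1} (k i j - k i n) * c j + c_tot * k i n`,
where `c_tot = ∑ r, c r`. -/
def MSmatF0 (m : ℕ) (k : Fin (m + 1) → Fin (m + 1) → ℝ)
    (c : Fin (m + 1) → ℝ) : Matrix (Fin m) (Fin m) ℝ :=
  Matrix.of fun i j =>
    if i = j then
      (∑ j' ∈ Finset.univ.erase i,
          (k i.castSucc j'.castSucc - k i.castSucc (Fin.last m)) * c j'.castSucc)
        + (∑ r, c r) * k i.castSucc (Fin.last m)
    else -((k i.castSucc j.castSucc - k i.castSucc (Fin.last m)) * c i.castSucc)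

/-- The vector `c̃′` with entries `(c̃′) i = k i n * c i`, `i = 1, …, n - 1`. -/
def MSctil (m : ℕ) (k : Fin (m + 1) → Fin (m + 1) → ℝ)
    (c : Fin (m + 1) → ℝ) : Fin m → ℝ :=
  fun i => k i.castSucc (Fin.last m) * c i.castSucc

/-!
Both claims rest on the row formula `(F w) i = ∑ r, k i r (c i w r - c r w i)` and on the
entrywise relations `F₀ i j = c̃′ i - F i j`, `F i n = c̃′ i` for `i, j < n`. Together they give
`F₀ w′ = (∑ w) c̃′ - (F w)′` for every `w ∈ ℝⁿ`; applied to the columns of `J` this is the first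
claim.

For the second, `F₀` is nonsingular. If `F₀ v = 0`, extend `v` by `-∑ v` to a zero-sum `w`: the
first `n - 1` entries of `F w` vanish, and so does the last one because the columns of `F` sum to
zero (`k` is symmetric). The kernel of `F` is spanned by `c`: at an index maximising `w i / c i`
over the support of `c` all summands of the row formula are `≤ 0`, hence all vanish. Since
`∑ c > 0`, a zero-sum multiple of `c` is `0`.
-/

open Matrix

lemma exists_pos_of_sum_pos {ι M : Type*} [AddCommMonoid M] [LinearOrder M] [AddLeftMono M]
    {s : Finset ι} {f : ι → M} (h : 0 < ∑ i ∈ s, f i) :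
    ∃ i ∈ s, 0 < f i :=
  Finset.exists_lt_of_sum_lt (f := 0) (by simpa using h)

lemma MSmatF_eq_sub_diagonal (m : ℕ) (k : Fin (m + 1) → Fin (m + 1) → ℝ)
    (c : Fin (m + 1) → ℝ) :
    MSmatF m k c = of (fun i j => k i j * c i) - diagonal (fun i => ∑ r, k i r * c r) := by
  ext i j
  rcases eq_or_ne i j with rfl | hij
  · simp [MSmatF, Finset.sum_erase_eq_sub]
  · simp [MSmatF, hij]

section MaxwellStefan

variable {m : ℕ} {k : Fin (m + 1) → Fin (m + 1) → ℝ} {c : Fin (m + 1) → ℝ}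

lemma MSmatF_mulVec_apply (w : Fin (m + 1) → ℝ) (i : Fin (m + 1)) :
    (MSmatF m k c *ᵥ w) i = ∑ r, k i r * (c i * w r - c r * w i) := by
  rw [MSmatF_eq_sub_diagonal, sub_mulVec, Pi.sub_apply, mulVec_diagonal, Finset.sum_mul, mulVec,
    dotProduct, ← Finset.sum_sub_distrib]
  exact Finset.sum_congr rfl fun r _ => by simp only [of_apply]; ring

lemma MSmatF_castSucc_last (i : Fin m) :
    MSmatF m k c i.castSucc (Fin.last m) = MSctil m k c i := by
  simp [MSmatF, MSctil, Fin.castSucc_ne_last, mul_comm]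

lemma MSmatF0_apply (i j : Fin m) :
    MSmatF0 m k c i j = MSctil m k c i - MSmatF m k c i.castSucc j.castSucc := by
  rw [MSmatF_eq_sub_diagonal]
  rcases eq_or_ne i j with rfl | hij
  · simp only [MSmatF0, MSctil, of_apply, if_true, Matrix.sub_apply, diagonal_apply_eq]
    have hsplit := fun f : Fin m → ℝ => (Finset.add_sum_erase _ f (Finset.mem_univ i)).symm
    rw [Fin.sum_univ_castSucc, Fin.sum_univ_castSucc, hsplit, hsplit]
    simp only [sub_mul, Finset.sum_sub_distrib, ← Finset.mul_sum]
    ring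
  · simp only [MSmatF0, MSctil, of_apply, if_neg hij, Matrix.sub_apply,
      diagonal_apply_ne _ (Fin.castSucc_inj.not.mpr hij), sub_zero]
    ring

lemma MSmatF0_mulVec_init (w : Fin (m + 1) → ℝ) (i : Fin m) :
    (MSmatF0 m k c *ᵥ Fin.init w) i =
      MSctil m k c i * ∑ r, w r - (MSmatF m k c *ᵥ w) i.castSucc := by
  simp only [mulVec, dotProduct, MSmatF0_apply, Fin.sum_univ_castSucc (fun r => _ * w r),
    MSmatF_castSucc_last, Fin.init, sub_mul, Finset.sum_sub_distrib, Finset.mul_sum]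
  ring

lemma sum_MSmatF_mulVec (hsymm : ∀ i j, k i j = k j i) (w : Fin (m + 1) → ℝ) :
    ∑ i, (MSmatF m k c *ᵥ w) i = 0 := by
  have hswap : ∑ i, ∑ r, k i r * (c r * w i) = ∑ i, ∑ r, k i r * (c i * w r) := by
    rw [Finset.sum_comm]
    simp only [hsymm]
  simp only [MSmatF_mulVec_apply, mul_sub, Finset.sum_sub_distrib, hswap, sub_self]

lemma apply_eq_zero_of_MSmatF_mulVec_eq_zero {w : Fin (m + 1) → ℝ}
    (hkpos : ∀ i j, i ≠ j → 0 < k i j) (hc : ∀ i, 0 ≤ c i) (hpos : 0 < ∑ i, c i)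
    (hw : MSmatF m k c *ᵥ w = 0) {i : Fin (m + 1)} (hci : c i = 0) : w i = 0 := by
  have hrow : (∑ r, k i r * c r) * w i = 0 := by
    have := congrFun hw i
    simp only [MSmatF_mulVec_apply, hci, zero_mul, zero_sub, Pi.zero_apply] at this
    simpa [Finset.sum_mul, Finset.sum_neg_distrib, mul_assoc] using this
  obtain ⟨r, -, hcr⟩ := exists_pos_of_sum_pos hpos
  have hri : r ≠ i := by rintro rfl; exact hcr.ne' hci
  have hflow : 0 < ∑ r, k i r * c r := by
    refine Finset.sum_pos' (fun j _ => ?_)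
      ⟨r, Finset.mem_univ r, mul_pos (hkpos i r hri.symm) hcr⟩
    rcases eq_or_ne i j with rfl | hij
    · rw [hci, mul_zero]
    · exact mul_nonneg (hkpos i j hij).le (hc j)
  exact (mul_eq_zero.mp hrow).resolve_left hflow.ne'

lemma exists_eq_smul_of_MSmatF_mulVec_eq_zero {w : Fin (m + 1) → ℝ}
    (hkpos : ∀ i j, i ≠ j → 0 < k i j) (hc : ∀ i, 0 ≤ c i) (hpos : 0 < ∑ i, c i)
    (hw : MSmatF m k c *ᵥ w = 0) :
    ∃ t : ℝ, w = t • c := by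
  classical
  obtain ⟨i₀, hi₀, hmax⟩ :=
    (Finset.univ.filter fun i => 0 < c i).exists_max_image (fun i => w i / c i) <| by
      simpa [Finset.filter_nonempty_iff] using exists_pos_of_sum_pos hpos
  have hci₀ : 0 < c i₀ := (Finset.mem_filter.mp hi₀).2
  have hle : ∀ r, c i₀ * w r ≤ c r * w i₀ := by
    intro r
    rcases (hc r).eq_or_lt with hcr | hcr
    · rw [← hcr, apply_eq_zero_of_MSmatF_mulVec_eq_zero hkpos hc hpos hw hcr.symm]
      simp
    · have := hmax r (by simpa using hcr)
      rw [div_le_div_iff₀ hcr hci₀] at this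
      linarith
  -- at `i₀` every summand of the row formula is `≤ 0`, and they add up to `0`
  have hnonpos : ∀ r ∈ Finset.univ, k i₀ r * (c i₀ * w r - c r * w i₀) ≤ 0 := by
    intro r _
    rcases eq_or_ne i₀ r with rfl | hr
    · simp
    · exact mul_nonpos_of_nonneg_of_nonpos (hkpos i₀ r hr).le (sub_nonpos.mpr (hle r))
  have hterm := (Finset.sum_eq_zero_iff_of_nonpos hnonpos).mp
    ((MSmatF_mulVec_apply w i₀).symm.trans (congrFun hw i₀))
  refine ⟨w i₀ / c i₀, funext fun r => ?_⟩
  have hprop : c i₀ * w r = c r * w i₀ := by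
    rcases eq_or_ne i₀ r with rfl | hr
    · ring
    · have := hterm r (Finset.mem_univ r)
      rwa [mul_eq_zero, or_iff_right (hkpos i₀ r hr).ne', sub_eq_zero] at this
  simp only [Pi.smul_apply, smul_eq_mul]
  field_simp
  linarith

lemma eq_zero_of_MSmatF_mulVec_eq_zero_of_sum_eq_zero {w : Fin (m + 1) → ℝ}
    (hkpos : ∀ i j, i ≠ j → 0 < k i j) (hc : ∀ i, 0 ≤ c i) (hpos : 0 < ∑ i, c i)
    (hw : MSmatF m k c *ᵥ w = 0) (hsum : ∑ i, w i = 0) : w = 0 := by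
  obtain ⟨t, rfl⟩ := exists_eq_smul_of_MSmatF_mulVec_eq_zero hkpos hc hpos hw
  have ht : t = 0 := by
    simpa [← Finset.mul_sum, hpos.ne'] using hsum
  rw [ht, zero_smul]

lemma det_MSmatF0_ne_zero (hsymm : ∀ i j, k i j = k j i) (hkpos : ∀ i j, i ≠ j → 0 < k i j)
    (hc : ∀ i, 0 ≤ c i) (hpos : 0 < ∑ i, c i) : (MSmatF0 m k c).det ≠ 0 := by
  intro hdet
  obtain ⟨v, hv, hv0⟩ := exists_mulVec_eq_zero_iff.mpr hdet
  set w : Fin (m + 1) → ℝ := Fin.snoc v (-∑ i, v i)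
  have hv_init : Fin.init w = v := Fin.init_snoc _ _
  have hsum : ∑ i, w i = 0 := by simp [w, Fin.sum_univ_castSucc]
  have hinit : ∀ i : Fin m, (MSmatF m k c *ᵥ w) i.castSucc = 0 := fun i => by
    simpa [hv_init, hsum, hv0] using (MSmatF0_mulVec_init (k := k) (c := c) w i).symm
  have hFw : MSmatF m k c *ᵥ w = 0 := by
    have hlast := sum_MSmatF_mulVec (c := c) hsymm w
    rw [Fin.sum_univ_castSucc, Finset.sum_eq_zero fun i _ => hinit i, zero_add] at hlast
    exact funext (Fin.lastCases hlast hinit)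
  apply hv
  rw [← hv_init, eq_zero_of_MSmatF_mulVec_eq_zero_of_sum_eq_zero hkpos hc hpos hFw hsum]
  rfl

end MaxwellStefan

theorem flux_gradient_inversion_general
    (m : ℕ)
    (k : Fin (m + 1) → Fin (m + 1) → ℝ)
    (hsymm : ∀ i j, k i j = k j i)
    (hkpos : ∀ i j, i ≠ j → 0 < k i j)
    (c : Fin (m + 1) → ℝ)
    (hc : ∀ i, 0 ≤ c i)
    (cmin : ℝ)
    (hcmin : 0 < cmin)
    (hmin : cmin ≤ ∑ i, c i)
    (d : ℕ)
    (J D : Matrix (Fin (m + 1)) (Fin d) ℝ)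
    (g : Fin d → ℝ) (α : ℝ)
    (hFJ : MSmatF m k c * J = D)
    (hclos : ∀ j : Fin d, ∑ i, J i j = -(α * g j)) :
    MSmatF0 m k c * Matrix.of (fun (i : Fin m) (j : Fin d) => J i.castSucc j)
        = -(Matrix.of (fun (i : Fin m) (j : Fin d) => D i.castSucc j)
            + α • Matrix.vecMulVec (MSctil m k c) g)
      ∧
      Matrix.of (fun (i : Fin m) (j : Fin d) => J i.castSucc j)
        = -((MSmatF0 m k c)⁻¹
            * (Matrix.of (fun (i : Fin m) (j : Fin d) => D i.castSucc j)
               + α • Matrix.vecMulVec (MSctil m k c) g)) := by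
  have hreduced : MSmatF0 m k c * Matrix.of (fun (i : Fin m) (j : Fin d) => J i.castSucc j)
      = -(Matrix.of (fun (i : Fin m) (j : Fin d) => D i.castSucc j)
          + α • Matrix.vecMulVec (MSctil m k c) g) := by
    subst hFJ
    ext i j
    have hcol := MSmatF0_mulVec_init (k := k) (c := c) (fun r => J r j) i
    rw [hclos j] at hcol
    simp only [mulVec, dotProduct, Fin.init] at hcol
    simp only [mul_apply, of_apply, Matrix.neg_apply, Matrix.add_apply, Matrix.smul_apply,
      vecMulVec_apply, smul_eq_mul, hcol]
    ring
  have hdet : IsUnit (MSmatF0 m k c).det :=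
    (det_MSmatF0_ne_zero hsymm hkpos hc (hcmin.trans_le hmin)).isUnit
  refine ⟨hreduced, ?_⟩
  rw [← neg_eq_iff_eq_neg.mpr hreduced, Matrix.mul_neg, neg_neg,
    nonsing_inv_mul_cancel_left _ _ hdet]

/-- algebraic inversion of the flux–gradient relations: if
`F J = D` and the columns of `J` satisfy the closure relation
`∑ i, J i j = -α g j`, then the submatrix `J′` of the first `n - 1` rows of `J`
satisfies `F₀ J′ = -(D′ + α c̃′ ⊗ g)`, and consequently
`J′ = -F₀⁻¹ (D′ + α c̃′ ⊗ g)`. -/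
theorem flux_gradient_inversion
    (m : ℕ) (hm : 1 ≤ m)
    (k : Fin (m + 1) → Fin (m + 1) → ℝ)
    (hsymm : ∀ i j, k i j = k j i)
    (hkpos : ∀ i j, i ≠ j → 0 < k i j)
    (c : Fin (m + 1) → ℝ)
    (hc : ∀ i, 0 ≤ c i)
    (cmin cmax : ℝ)
    (hcmin : 0 < cmin)
    (hmin : cmin ≤ ∑ i, c i)
    (hmax : ∑ i, c i ≤ cmax)
    (d : ℕ) (hd : 1 ≤ d)
    (J D : Matrix (Fin (m + 1)) (Fin d) ℝ)
    (g : Fin d → ℝ) (α : ℝ)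
    (hFJ : MSmatF m k c * J = D)
    (hclos : ∀ j : Fin d, ∑ i, J i j = -(α * g j)) :
    MSmatF0 m k c * Matrix.of (fun (i : Fin m) (j : Fin d) => J i.castSucc j)
        = -(Matrix.of (fun (i : Fin m) (j : Fin d) => D i.castSucc j)
            + α • Matrix.vecMulVec (MSctil m k c) g)
      ∧
      Matrix.of (fun (i : Fin m) (j : Fin d) => J i.castSucc j)
        = -((MSmatF0 m k c)⁻¹
            * (Matrix.of (fun (i : Fin m) (j : Fin d) => D i.castSucc j)
               + α • Matrix.vecMulVec (MSctil m k c) g)) :=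
  flux_gradient_inversion_general m k hsymm hkpos c hc cmin hcmin hmin d J D g α hFJ hclos
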